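/- arXiv:2310.01910 — 2 statements merged into one kernel-verified Lean document; each statement's English description precedes it below -/
import Mathlib

section
/- Let K and K' be nontrivial positive and multiplicatively cancellative commutative semirings, V a finite schema of variables with finite nonempty domains, and Σ ∪ {τ} a set of saturated conditional independencies and functional dependencies over V. Then Σ implies τ over K-relations if and only if Σ implies τ over K'-relations. -/
/-! # Preliminaries: K-relations over semirings -/

open Finset

variable {V : Type*}

/-- A tuple over the finite set `X` of variables: it assigns to each variable
`a ∈ X` a value in its domain `Dom a`. -/
abbrev Tup (Dom : V → Type*) (X : Finset V) : Type _ :=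
  ∀ a : X, Dom a

/-- Restriction `t[Y]` of a tuple `t` over `X` to a subset `Y ⊆ X`. -/
def Tup.restrict {Dom : V → Type*} {X Y : Finset V} (h : Y ⊆ X) (t : Tup Dom X) :
    Tup Dom Y :=
  fun a => t ⟨a.1, h a.2⟩

open Classical in
/-- The marginal of a `K`-relation `R` over a schema `X` on a subset `Y ⊆ X`,
evaluated at a tuple `u` over `Y`: the sum of `R t` over all tuples `t` over `X`
with `t[Y] = u`. -/
noncomputable def margin {K : Type*} [CommSemiring K] [DecidableEq V]
    {Dom : V → Type*} [∀ a, Fintype (Dom a)] {X Y : Finset V}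
    (R : Tup Dom X → K) (h : Y ⊆ X) (u : Tup Dom Y) : K :=
  ∑ t : Tup Dom X, if Tup.restrict h t = u then R t else 0

open Classical in
/-- `c_S(u)`: the product of the marginal `S[Z]` over all tuples `v` in the
support of `S[Z]` different from `u` (empty products are `1`). -/
noncomputable def cfun {K : Type*} [CommSemiring K] [DecidableEq V]
    {Dom : V → Type*} [∀ a, Fintype (Dom a)] {Y Z : Finset V}
    (S : Tup Dom Y → K) (h : Z ⊆ Y) (u : Tup Dom Z) : K :=
  ∏ v : Tup Dom Z, if margin S h v ≠ 0 ∧ v ≠ u then margin S h v else 1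

/-- The join `R ⋈ S` of a `K`-relation `R` over `X` and a `K`-relation `S` over `Y`,
realized on the schema `T = X ∪ Y`:
`(R ⋈ S)(t) = R(t[X]) ⬝ S(t[Y]) ⬝ c_S(t[X ∩ Y])`. -/
noncomputable def joinOn {K : Type*} [CommSemiring K] [DecidableEq V]
    {Dom : V → Type*} [∀ a, Fintype (Dom a)] {X Y T : Finset V}
    (R : Tup Dom X → K) (S : Tup Dom Y → K)
    (hX : X ⊆ T) (hY : Y ⊆ T) (_hT : T ⊆ X ∪ Y) : Tup Dom T → K :=
  fun t =>
    R (Tup.restrict hX t) * S (Tup.restrict hY t) *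
      cfun (Z := X ∩ Y) S Finset.inter_subset_right
        (Tup.restrict ((Finset.inter_subset_right (s₁ := X)).trans hY) t)

/-- A `K`-relation `R` over the schema `S` satisfies the conditional independence
`CI(X; Y, Z)` (for `X, Y, Z ⊆ S`) if for every tuple `t` over `X ∪ Y ∪ Z`,
`R(t[X∪Y]) ⬝ R(t[X∪Z]) = R(t[X∪Y∪Z]) ⬝ R(t[X])`, all values being marginals of `R`. -/
def satCI {K : Type*} [CommSemiring K] [DecidableEq V]
    {Dom : V → Type*} [∀ a, Fintype (Dom a)] {S X Y Z : Finset V}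
    (R : Tup Dom S → K) (hX : X ⊆ S) (hY : Y ⊆ S) (hZ : Z ⊆ S) : Prop :=
  ∀ t : Tup Dom (X ∪ Y ∪ Z),
    margin R (Finset.union_subset hX hY) (Tup.restrict Finset.subset_union_left t) *
      margin R (Finset.union_subset hX hZ)
        (Tup.restrict (Finset.union_subset
          (Finset.subset_union_left.trans Finset.subset_union_left)
          Finset.subset_union_right) t) =
    margin R (Finset.union_subset (Finset.union_subset hX hY) hZ) t *
      margin R hX
        (Tup.restrict (Finset.subset_union_left.trans Finset.subset_union_left) t)

/-- A `K`-relation `R` over the schema `S` satisfies the functional dependency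
`U → W` if any two tuples in the support of `R` agreeing on `U` agree on `W`. -/
def satFD {K : Type*} [Zero K] {Dom : V → Type*} {S U W : Finset V}
    (R : Tup Dom S → K) (hU : U ⊆ S) (hW : W ⊆ S) : Prop :=
  ∀ t t' : Tup Dom S, R t ≠ 0 → R t' ≠ 0 →
    Tup.restrict hU t = Tup.restrict hU t' → Tup.restrict hW t = Tup.restrict hW t'

/-- Two `K`-relations over the same schema are equivalent (up to normalization),
`R ≡ R'`, if `aR = bR'` for some nonzero `a, b ∈ K`. -/
def equivRel {K : Type*} [CommSemiring K] {Dom : V → Type*} {X : Finset V}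
    (R R' : Tup Dom X → K) : Prop :=
  ∃ a b : K, a ≠ 0 ∧ b ≠ 0 ∧ ∀ t, a * R t = b * R' t

/-- `K` is `⊕`-positive: `a + b = 0` implies `a = b = 0`. -/
def plusPos (K : Type*) [CommSemiring K] : Prop :=
  ∀ a b : K, a + b = 0 → a = 0 ∧ b = 0

/-- `K` has no divisors of zero. -/
def noZD (K : Type*) [CommSemiring K] : Prop :=
  ∀ a b : K, a * b = 0 → a = 0 ∨ b = 0

/-- `K` is positive: `⊕`-positive and without zero divisors. -/
def posSemiring (K : Type*) [CommSemiring K] : Prop :=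
  plusPos K ∧ noZD K

/-- `K` is multiplicatively cancellative. -/
def mulCanc (K : Type*) [CommSemiring K] : Prop :=
  ∀ a b c : K, a ≠ 0 → a * b = a * c → b = c

/-- `K` is additively cancellative. -/
def addCanc (K : Type*) [CommSemiring K] : Prop :=
  ∀ a b c : K, a + b = a + c → b = c

/-- `K` is naturally totally ordered: the preorder `a ≤ b ↔ ∃ c, a + c = b`
is antisymmetric and total. -/
def natTotOrd (K : Type*) [CommSemiring K] : Prop :=
  (∀ a b : K, (∃ c, a + c = b) → (∃ c, b + c = a) → a = b) ∧
    (∀ a b : K, (∃ c, a + c = b) ∨ (∃ c, b + c = a))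

/-- `K` is a semifield: every nonzero element has a multiplicative inverse. -/
def isSemifield (K : Type*) [CommSemiring K] : Prop :=
  ∀ a : K, a ≠ 0 → ∃ b, a * b = 1

theorem subL [DecidableEq V] {X Y Z : Finset V} : X ⊆ X ∪ Y ∪ Z :=
  Finset.subset_union_left.trans Finset.subset_union_left

theorem subM [DecidableEq V] {X Y Z : Finset V} : Y ⊆ X ∪ Y ∪ Z :=
  Finset.subset_union_right.trans Finset.subset_union_left

theorem subR [DecidableEq V] {X Y Z : Finset V} : Z ⊆ X ∪ Y ∪ Z :=
  Finset.subset_union_right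

theorem subXY [DecidableEq V] {X Y Z : Finset V} : X ∪ Y ⊆ X ∪ Y ∪ Z :=
  Finset.subset_union_left

theorem subXZ [DecidableEq V] {X Y Z : Finset V} : X ∪ Z ⊆ X ∪ Y ∪ Z :=
  Finset.union_subset subL subR

theorem unionSplit [DecidableEq V] {X Y Z : Finset V} :
    X ∪ Y ∪ Z ⊆ (X ∪ Y) ∪ (X ∪ Z) := by
  intro a ha
  simp only [Finset.mem_union] at ha ⊢
  tauto

/-- The two-element Boolean semiring `𝔹 = ({0,1}, ∨, ∧, 0, 1)`. -/
def B2 : Type := Bool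

instance : DecidableEq B2 := inferInstanceAs (DecidableEq Bool)
instance : Fintype B2 := inferInstanceAs (Fintype Bool)

instance : CommSemiring B2 where
  add a b := Bool.or a b
  zero := Bool.false
  add_assoc := by decide
  zero_add := by decide
  add_zero := by decide
  add_comm := by decide
  mul a b := Bool.and a b
  one := Bool.true
  mul_assoc := by decide
  one_mul := by decide
  mul_one := by decide
  zero_mul := by decide
  mul_zero := by decide
  left_distrib := by decide
  right_distrib := by decide
  mul_comm := by decide
  nsmul n b := match n with | 0 => Bool.false | _ + 1 => b
  nsmul_zero := fun _ => rfl
  nsmul_succ := fun n x => match n with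
    | 0 => rfl
    | _ + 1 => (Bool.or_self x).symm

instance : Nontrivial B2 := ⟨0, 1, by decide⟩

/-- Constraints over the schema `V`: conditional independencies `CI(X; Y, Z)` and
functional dependencies `U → W`. -/
inductive Constraint (V : Type*) : Type _ where
  | ci (X Y Z : Finset V) : Constraint V
  | fd (U W : Finset V) : Constraint V

/-- Satisfaction of a constraint by a `K`-relation over the full schema `V`. -/
def Constraint.SatBy [DecidableEq V] [Fintype V] {Dom : V → Type*}
    [∀ a, Fintype (Dom a)] {K : Type*} [CommSemiring K]
    (σ : Constraint V) (R : Tup Dom (Finset.univ : Finset V) → K) : Prop :=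
  match σ with
  | .ci X Y Z =>
      satCI R (Finset.subset_univ X) (Finset.subset_univ Y) (Finset.subset_univ Z)
  | .fd U W => satFD R (Finset.subset_univ U) (Finset.subset_univ W)

/-- A constraint is a saturated CI (pairwise disjoint components covering the
schema) or a functional dependency. -/
def Constraint.SCIorFD [DecidableEq V] [Fintype V] : Constraint V → Prop
  | .ci X Y Z => Disjoint X Y ∧ Disjoint X Z ∧ Disjoint Y Z ∧ X ∪ Y ∪ Z = Finset.univ
  | .fd _ _ => True

/-- `Σ` implies `τ` over `K`-relations (with nonempty support) over the full schema `V`. -/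
def impliesOver [DecidableEq V] [Fintype V] (Dom : V → Type*) [∀ a, Fintype (Dom a)]
    (K : Type*) [CommSemiring K] (Sig : Set (Constraint V)) (τ : Constraint V) : Prop :=
  ∀ R : Tup Dom (Finset.univ : Finset V) → K, (∃ t, R t ≠ 0) →
    (∀ σ ∈ Sig, σ.SatBy R) → τ.SatBy R


/-!
Both sides are compared with implication over the Boolean semiring `𝔹`. Over a positive,
multiplicatively cancellative semiring a saturated `CI(X; Y, Z)` holds iff swapping the `Z`-parts
of two tuples that agree on `X` preserves the product of their annotations (`Exchange`), and an FD
only sees the support. Hence annotating the support of a relation by `1` preserves every constraint,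
in either direction; this settles everything except deriving a CI `τ` over `K` from `𝔹`.

For that case take tuples `t, s` in the support of `R` that agree on `X`, and let `D` be the set
of variables where they differ. The subsets of `D` obtained from `∅` and `D` by splicing along the
CIs of `Σ` form a Boolean algebra; the `𝔹`-relation supported on the corresponding mixtures of `t`
and `s` satisfies `Σ`, hence `τ`, so `D ∩ Z` belongs to it. Two distinct atoms of the algebra are
separated by a CI of `Σ`, and the exchange identities then make `A ↦ R (mixOn A t s)`
multiplicative on disjoint unions (up to the factor `R t`). Applied to `D = (D \ Z) ∪ (D ∩ Z)`
this is the exchange identity of `τ` for `t, s`.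
-/

section FullTuples

variable [Fintype V] {Dom : V → Type*}

abbrev FullTup (Dom : V → Type*) : Type _ := Tup Dom (Finset.univ : Finset V)

def agreeOn (A : Finset V) (t s : FullTup Dom) : Prop :=
  ∀ a : (Finset.univ : Finset V), a.1 ∈ A → t a = s a

lemma agreeOn.symm {A : Finset V} {t s : FullTup Dom} (h : agreeOn A t s) : agreeOn A s t :=
  fun a ha => (h a ha).symm

lemma restrict_eq_restrict_iff {A : Finset V} {t s : FullTup Dom} :
    Tup.restrict (subset_univ A) t = Tup.restrict (subset_univ A) s ↔ agreeOn A t s :=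
  ⟨fun h a ha => congrFun h ⟨a.1, ha⟩, fun h => funext fun a => h ⟨a.1, mem_univ _⟩ a.2⟩

variable [DecidableEq V]

def mixOn (W : Finset V) (t s : FullTup Dom) : FullTup Dom :=
  fun a => if a.1 ∈ W then s a else t a

lemma mixOn_mixOn_self (Z : Finset V) (t s : FullTup Dom) :
    mixOn Z (mixOn Z t s) (mixOn Z s t) = t := by
  funext a
  by_cases h : a.1 ∈ Z <;> simp [mixOn, h]

lemma agreeOn_mixOn_mixOn {X Z : Finset V} {t s : FullTup Dom} (h : agreeOn X t s) :
    agreeOn X (mixOn Z t s) (mixOn Z s t) := by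
  intro a ha
  by_cases hZ : a.1 ∈ Z <;> simp [mixOn, hZ, h a ha]

lemma agreeOn_mixOn_left {A Z : Finset V} (h : Disjoint A Z) (t s : FullTup Dom) :
    agreeOn A (mixOn Z t s) t :=
  fun _ ha => if_neg (disjoint_left.mp h ha)

lemma agreeOn_mixOn_right {X Z : Finset V} {t s : FullTup Dom} (h : agreeOn X t s) :
    agreeOn (X ∪ Z) (mixOn Z t s) s := by
  intro a ha
  by_cases hZ : a.1 ∈ Z
  · exact if_pos hZ
  · rw [mixOn, if_neg hZ]
    exact h a ((mem_union.mp ha).resolve_right hZ)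

end FullTuples

section Marginals

variable [DecidableEq V] [Fintype V] {Dom : V → Type*} [∀ a, Fintype (Dom a)]
  {K : Type*} [CommSemiring K]

noncomputable def marginAt (R : FullTup Dom → K) (A : Finset V) (w : FullTup Dom) : K :=
  margin R (subset_univ A) (Tup.restrict (subset_univ A) w)

open Classical in
lemma marginAt_eq_sum_filter (R : FullTup Dom → K) (A : Finset V) (w : FullTup Dom) :
    marginAt R A w = ∑ w' ∈ univ.filter (agreeOn A · w), R w' := by
  rw [marginAt, margin, sum_filter]
  exact sum_congr rfl fun w' _ => if_congr restrict_eq_restrict_iff rfl rfl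

lemma marginAt_congr {R : FullTup Dom → K} {A : Finset V} {w w' : FullTup Dom}
    (h : agreeOn A w w') : marginAt R A w = marginAt R A w' := by
  rw [marginAt, restrict_eq_restrict_iff.mpr h, marginAt]

lemma marginAt_of_eq_univ (R : FullTup Dom → K) {A : Finset V} (hA : A = univ) (w : FullTup Dom) :
    marginAt R A w = R w := by
  classical
  subst hA
  have hw : univ.filter (agreeOn univ · w) = {w} := by
    ext w'
    simp only [mem_filter, mem_univ, true_and, mem_singleton]
    exact ⟨fun h => funext fun a => h a (mem_univ _), fun h a _ => by rw [h]⟩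
  rw [marginAt_eq_sum_filter, hw, sum_singleton]

lemma marginAt_ne_zero (hpos : plusPos K) {R : FullTup Dom → K} (A : Finset V) {w : FullTup Dom}
    (hw : R w ≠ 0) : marginAt R A w ≠ 0 := by
  classical
  rw [marginAt_eq_sum_filter, ← add_sum_erase _ _ (mem_filter.mpr ⟨mem_univ w, fun _ _ => rfl⟩)]
  exact fun h => hw (hpos _ _ h).1

lemma satCI_iff_forall_marginAt {R : FullTup Dom → K} {X Y Z : Finset V}
    (hcov : X ∪ Y ∪ Z = univ) :
    satCI R (subset_univ X) (subset_univ Y) (subset_univ Z) ↔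
      ∀ w, marginAt R (X ∪ Y) w * marginAt R (X ∪ Z) w = R w * marginAt R X w := by
  constructor
  · intro h w
    rw [← marginAt_of_eq_univ R hcov w]
    exact h (Tup.restrict (subset_univ _) w)
  · intro h t
    obtain ⟨w, rfl⟩ : ∃ w : FullTup Dom, Tup.restrict (subset_univ _) w = t :=
      ⟨fun a => t ⟨a.1, by rw [hcov]; exact mem_univ _⟩, rfl⟩
    have hw := h w
    rw [← marginAt_of_eq_univ R hcov w] at hw
    exact hw

end Marginals

section Exchange

variable [DecidableEq V] [Fintype V] {Dom : V → Type*} {K : Type*} [CommSemiring K]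

/-- The form a saturated `CI(X; Y, Z)` takes over positive, multiplicatively cancellative
semirings. -/
def Exchange (R : FullTup Dom → K) (X Z : Finset V) : Prop :=
  ∀ t s, agreeOn X t s → R t * R s = R (mixOn Z t s) * R (mixOn Z s t)

lemma exchange_of_support [NoZeroDivisors K] {R : FullTup Dom → K} {X Z : Finset V}
    (h : ∀ t s, agreeOn X t s → R t ≠ 0 → R s ≠ 0 →
      R t * R s = R (mixOn Z t s) * R (mixOn Z s t)) :
    Exchange R X Z := by
  intro t s hts
  by_cases hsupp : R t ≠ 0 ∧ R s ≠ 0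
  · exact h t s hts hsupp.1 hsupp.2
  -- if the swapped pair were in the support, swapping back would put `t, s` in it
  have hswap : ¬ (R (mixOn Z t s) ≠ 0 ∧ R (mixOn Z s t) ≠ 0) := fun hm => by
    have h' := h _ _ (agreeOn_mixOn_mixOn hts) hm.1 hm.2
    rw [mixOn_mixOn_self, mixOn_mixOn_self] at h'
    have hts0 : R t * R s ≠ 0 := h' ▸ mul_ne_zero hm.1 hm.2
    exact hsupp ⟨left_ne_zero_of_mul hts0, right_ne_zero_of_mul hts0⟩
  rw [not_and_or, not_not, not_not] at hsupp hswap
  rcases hsupp with h | h <;> rcases hswap with h' | h' <;> simp [h, h']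

variable [∀ a, Fintype (Dom a)]

lemma exchange_of_satCI (hpos : plusPos K) [IsCancelMulZero K] {R : FullTup Dom → K}
    {X Y Z : Finset V} (hXZ : Disjoint X Z) (hYZ : Disjoint Y Z) (hcov : X ∪ Y ∪ Z = univ)
    (h : satCI R (subset_univ X) (subset_univ Y) (subset_univ Z)) : Exchange R X Z := by
  rw [satCI_iff_forall_marginAt hcov] at h
  intro t s hts
  have hXY : Disjoint (X ∪ Y) Z := disjoint_union_left.mpr ⟨hXZ, hYZ⟩
  have hm := h (mixOn Z t s)
  have hm' := h (mixOn Z s t)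
  have hs := h s
  rw [marginAt_congr (agreeOn_mixOn_left hXY t s), marginAt_congr (agreeOn_mixOn_right hts),
    marginAt_congr (agreeOn_mixOn_left hXZ t s)] at hm
  rw [marginAt_congr (agreeOn_mixOn_left hXY s t), marginAt_congr (agreeOn_mixOn_right hts.symm),
    marginAt_congr (agreeOn_mixOn_left hXZ s t), marginAt_congr hts.symm] at hm'
  rw [marginAt_congr hts.symm] at hs
  set p := marginAt R (X ∪ Y)
  set q := marginAt R (X ∪ Z)
  set n := marginAt R X t
  by_cases hn : n = 0
  · have hzero : ∀ w, agreeOn X w t → R w = 0 := fun w hw => by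
      by_contra hw'
      exact marginAt_ne_zero hpos X hw' ((marginAt_congr hw).trans hn)
    rw [hzero t fun _ _ => rfl, zero_mul, hzero _ (agreeOn_mixOn_left hXZ t s), zero_mul]
  apply mul_right_cancel₀ (mul_ne_zero hn hn)
  calc R t * R s * (n * n) = (R t * n) * (R s * n) := by ring
    _ = (p t * q t) * (p s * q s) := by rw [h t, hs]
    _ = (p t * q s) * (p s * q t) := by ring
    _ = R (mixOn Z t s) * R (mixOn Z s t) * (n * n) := by rw [hm, hm']; ring

lemma satCI_of_exchange {R : FullTup Dom → K} {X Y Z : Finset V} (hXZ : Disjoint X Z)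
    (hYZ : Disjoint Y Z) (hcov : X ∪ Y ∪ Z = univ) (h : Exchange R X Z) :
    satCI R (subset_univ X) (subset_univ Y) (subset_univ Z) := by
  classical
  rw [satCI_iff_forall_marginAt hcov]
  intro w
  have hcov' : ∀ a : (univ : Finset V), a.1 ∉ Z → a.1 ∈ X ∪ Y := fun a ha => by
    have : a.1 ∈ X ∪ Y ∪ Z := by rw [hcov]; exact mem_univ _
    simp only [mem_union] at this ⊢
    tauto
  rw [marginAt_eq_sum_filter, marginAt_eq_sum_filter, marginAt_eq_sum_filter, sum_mul_sum, mul_sum,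
    ← sum_product']
  -- `(p, q) ↦ mixOn Z q p` matches the pairs of the two fibres with the `X`-fibre of `w`
  refine sum_nbij' (fun p => mixOn Z p.2 p.1) (fun u => (mixOn Z w u, mixOn Z u w))
    ?_ ?_ ?_ ?_ ?_ <;> simp only [mem_product, mem_filter, mem_univ, true_and, and_imp,
      Prod.forall, Prod.mk.injEq]
  · intro p q _ hq a ha
    exact (agreeOn_mixOn_left hXZ q p) a ha ▸ hq a (mem_union_left _ ha)
  · exact fun u hu => ⟨agreeOn_mixOn_left (disjoint_union_left.mpr ⟨hXZ, hYZ⟩) w u,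
      agreeOn_mixOn_right hu⟩
  · intro p q hp hq
    constructor <;> funext a <;> by_cases hZ : a.1 ∈ Z <;> simp [mixOn, hZ]
    · exact (hp a (hcov' a hZ)).symm
    · exact (hq a (mem_union_right _ hZ)).symm
  · intro u _
    funext a
    by_cases hZ : a.1 ∈ Z <;> simp [mixOn, hZ]
  · intro p q hp hq
    have hw : mixOn Z p q = w := by
      funext a
      by_cases hZ : a.1 ∈ Z <;> simp [mixOn, hZ]
      · exact hq a (mem_union_right _ hZ)
      · exact hp a (hcov' a hZ)
    rw [h p q fun a ha => (hp a (mem_union_left _ ha)).trans (hq a (mem_union_left _ ha)).symm,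
      hw]

end Exchange

section SupportIndicator

variable [Fintype V] {Dom : V → Type*} {K K' : Type*} [CommSemiring K] [CommSemiring K']

open Classical in
noncomputable def supportIndicator (K' : Type*) [CommSemiring K'] (R : FullTup Dom → K) :
    FullTup Dom → K' :=
  fun w => if R w = 0 then 0 else 1

lemma supportIndicator_eq_zero_iff [Nontrivial K'] {R : FullTup Dom → K} {w : FullTup Dom} :
    supportIndicator K' R w = 0 ↔ R w = 0 := by
  by_cases h : R w = 0 <;> simp [supportIndicator, h]

lemma supportIndicator_eq_zero_or_one (R : FullTup Dom → K) (w : FullTup Dom) :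
    supportIndicator K' R w = 0 ∨ supportIndicator K' R w = 1 := by
  by_cases h : R w = 0 <;> simp [supportIndicator, h]

lemma supportIndicator_supportIndicator [Nontrivial K] (R : FullTup Dom → B2) :
    supportIndicator B2 (supportIndicator K R) = R := by
  funext w
  rcases (by decide : ∀ b : B2, b = 0 ∨ b = 1) (R w) with h | h <;> simp [supportIndicator, h]

lemma satFD_of_support_subset {R : FullTup Dom → K} {R' : FullTup Dom → K'} {U W : Finset V}
    (hsupp : ∀ w, R' w ≠ 0 → R w ≠ 0) (h : satFD R (subset_univ U) (subset_univ W)) :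
    satFD R' (subset_univ U) (subset_univ W) :=
  fun t t' ht ht' => h t t' (hsupp t ht) (hsupp t' ht')

variable [DecidableEq V]

lemma exchange_of_mem_support [NoZeroDivisors K] {R : FullTup Dom → K} {X Z : Finset V}
    (h01 : ∀ w, R w = 0 ∨ R w = 1)
    (hmem : ∀ t s, agreeOn X t s → R t ≠ 0 → R s ≠ 0 → R (mixOn Z t s) ≠ 0) :
    Exchange R X Z := by
  have hval : ∀ w, R w ≠ 0 → R w = 1 := fun w hw => (h01 w).resolve_left hw
  refine exchange_of_support fun t s hts ht hs => ?_
  rw [hval t ht, hval s hs, hval _ (hmem t s hts ht hs), hval _ (hmem s t hts.symm hs ht)]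

lemma exchange_supportIndicator [NoZeroDivisors K] [Nontrivial K'] [NoZeroDivisors K']
    {R : FullTup Dom → K} {X Z : Finset V} (h : Exchange R X Z) :
    Exchange (supportIndicator K' R) X Z := by
  refine exchange_of_mem_support (supportIndicator_eq_zero_or_one R) fun t s hts ht hs => ?_
  simp only [ne_eq, supportIndicator_eq_zero_iff] at ht hs ⊢
  exact left_ne_zero_of_mul (h t s hts ▸ mul_ne_zero ht hs)

variable [∀ a, Fintype (Dom a)]

lemma Constraint.SatBy.supportIndicator (hpos : plusPos K) [IsCancelMulZero K]
    [Nontrivial K'] [NoZeroDivisors K'] {σ : Constraint V} (hσ : σ.SCIorFD) {R : FullTup Dom → K}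
    (h : σ.SatBy R) : σ.SatBy (supportIndicator K' R) := by
  cases σ with
  | ci X Y Z =>
    obtain ⟨-, hXZ, hYZ, hcov⟩ := hσ
    exact satCI_of_exchange hXZ hYZ hcov
      (exchange_supportIndicator (exchange_of_satCI hpos hXZ hYZ hcov h))
  | fd U W => exact satFD_of_support_subset (fun w => supportIndicator_eq_zero_iff.not.mp) h

end SupportIndicator

instance : IsCancelMulZero B2 :=
  have : IsLeftCancelMulZero B2 := ⟨fun {a b c} => by revert a b c; decide⟩
  IsLeftCancelMulZero.to_isCancelMulZero

lemma plusPos_B2 : plusPos B2 := by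
  unfold plusPos
  decide

lemma mulCanc.isCancelMulZero {K : Type*} [CommSemiring K] (h : mulCanc K) :
    IsCancelMulZero K :=
  have : IsLeftCancelMulZero K := ⟨fun ha _ _ => h _ _ _ ha⟩
  IsLeftCancelMulZero.to_isCancelMulZero

section Cube

variable [Fintype V] {Dom : V → Type*}

open Classical in
noncomputable def diffSet (t s : FullTup Dom) : Finset V :=
  univ.filter fun v => t ⟨v, mem_univ v⟩ ≠ s ⟨v, mem_univ v⟩

variable {t s : FullTup Dom}

lemma mem_diffSet {a : (univ : Finset V)} : a.1 ∈ diffSet t s ↔ t a ≠ s a := by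
  simp [diffSet]

variable [DecidableEq V]

lemma mixOn_empty : mixOn ∅ t s = t := by
  funext a
  simp [mixOn]

lemma mixOn_diffSet : mixOn (diffSet t s) t s = s := by
  funext a
  by_cases h : t a = s a <;> simp [mixOn, mem_diffSet, h]

lemma mixOn_diffSet_inter (W : Finset V) : mixOn (diffSet t s ∩ W) t s = mixOn W t s := by
  funext a
  by_cases h : t a = s a <;> simp [mixOn, mem_diffSet, h]

lemma mixOn_diffSet_sdiff (W : Finset V) : mixOn (diffSet t s \ W) t s = mixOn W s t := by
  funext a
  by_cases h : t a = s a <;> by_cases hW : a.1 ∈ W <;> simp [mixOn, mem_diffSet, h, hW]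

lemma mixOn_mixOn (Z A B : Finset V) :
    mixOn Z (mixOn A t s) (mixOn B t s) = mixOn (A \ Z ∪ B ∩ Z) t s := by
  funext a
  by_cases hZ : a.1 ∈ Z <;> simp [mixOn, hZ]

lemma agreeOn_mixOn_of_inter_eq {X A B : Finset V} (h : A ∩ X = B ∩ X) :
    agreeOn X (mixOn A t s) (mixOn B t s) := by
  intro a ha
  have hAB : a.1 ∈ A ↔ a.1 ∈ B := by simpa [ha] using congrArg (a.1 ∈ ·) h
  simp [mixOn, hAB]

lemma inter_eq_of_agreeOn_mixOn {X A B : Finset V} (hA : A ⊆ diffSet t s) (hB : B ⊆ diffSet t s)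
    (h : agreeOn X (mixOn A t s) (mixOn B t s)) : A ∩ X = B ∩ X := by
  ext v
  by_cases hX : v ∈ X
  swap
  · simp [hX]
  have hv := h ⟨v, mem_univ v⟩ hX
  have hAv := fun h => mem_diffSet (a := ⟨v, mem_univ v⟩).mp (hA h)
  have hBv := fun h => mem_diffSet (a := ⟨v, mem_univ v⟩).mp (hB h)
  simp only [mixOn] at hv
  by_cases hvA : v ∈ A <;> by_cases hvB : v ∈ B <;> simp_all

lemma mixOn_injOn {A B : Finset V} (hA : A ⊆ diffSet t s) (hB : B ⊆ diffSet t s)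
    (h : mixOn A t s = mixOn B t s) : A = B := by
  simpa using inter_eq_of_agreeOn_mixOn (X := univ) hA hB fun a _ => congrFun h a

end Cube

section SpliceClosure

variable [DecidableEq V]

/-- With `D = diffSet t s`, the members `A` index tuples `mixOn A t s` that lie in the support
of every relation satisfying the CIs of `Sig` whose support contains `t` and `s`. -/
inductive SpliceCl (Sig : Set (Constraint V)) (D : Finset V) : Finset V → Prop
  | empty : SpliceCl Sig D ∅
  | self : SpliceCl Sig D D
  | splice {X Y Z A B : Finset V} : Constraint.ci X Y Z ∈ Sig → SpliceCl Sig D A →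
      SpliceCl Sig D B → A ∩ X = B ∩ X → SpliceCl Sig D (A \ Z ∪ B ∩ Z)

namespace SpliceCl

variable {Sig : Set (Constraint V)} {D A Q : Finset V}

lemma subset (h : SpliceCl Sig D A) : A ⊆ D := by
  induction h with
  | empty => exact empty_subset D
  | self => exact Subset.rfl
  | splice _ _ _ _ ihA ihB =>
    exact union_subset (sdiff_subset.trans ihA) (inter_subset_left.trans ihB)

lemma compl (h : SpliceCl Sig D A) : SpliceCl Sig D (D \ A) := by
  induction h with
  | empty => simpa using self
  | self => simpa using empty
  | @splice X Y Z A B hσ _ _ hx ihA ihB =>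
    have hx' : (D \ A) ∩ X = (D \ B) ∩ X := by
      ext v
      have := Finset.ext_iff.mp hx v
      simp only [mem_inter, mem_sdiff] at this ⊢
      tauto
    convert splice hσ ihA ihB hx' using 1
    ext v
    simp only [mem_union, mem_inter, mem_sdiff]
    tauto

lemma inter (hA : SpliceCl Sig D A) (hQ : SpliceCl Sig D Q) : SpliceCl Sig D (A ∩ Q) := by
  induction hA with
  | empty => simpa using empty
  | self => rwa [inter_eq_right.mpr hQ.subset]
  | @splice X Y Z A B hσ _ _ hx ihA ihB =>
    have hx' : (A ∩ Q) ∩ X = (B ∩ Q) ∩ X := by rw [inter_right_comm, hx, inter_right_comm]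
    convert splice hσ ihA ihB hx' using 1
    ext v
    simp only [mem_union, mem_inter, mem_sdiff]
    tauto

lemma union (hA : SpliceCl Sig D A) (hQ : SpliceCl Sig D Q) : SpliceCl Sig D (A ∪ Q) := by
  induction hA with
  | empty => simpa using hQ
  | self => rw [union_eq_left.mpr hQ.subset]; exact self
  | @splice X Y Z A B hσ _ _ hx ihA ihB =>
    have hx' : (A ∪ Q) ∩ X = (B ∪ Q) ∩ X := by rw [union_inter_distrib_right, hx,
      union_inter_distrib_right]
    convert splice hσ ihA ihB hx' using 1
    ext v
    simp only [mem_union, mem_inter, mem_sdiff]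
    tauto

lemma sdiff (hA : SpliceCl Sig D A) (hQ : SpliceCl Sig D Q) : SpliceCl Sig D (A \ Q) := by
  convert hA.inter hQ.compl using 1
  ext v
  have : v ∈ A → v ∈ D := fun h => hA.subset h
  simp only [mem_sdiff, mem_inter]
  tauto

end SpliceCl

variable [Fintype V]

open Classical in
/-- The least member of the splice closure containing `d`. -/
noncomputable def atom (Sig : Set (Constraint V)) (D : Finset V) (d : V) : Finset V :=
  D \ (univ.filter (SpliceCl Sig D)).sup fun C => if d ∈ C then D \ C else C

variable {Sig : Set (Constraint V)} {D C : Finset V} {d v : V}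

lemma mem_atom :
    v ∈ atom Sig D d ↔ v ∈ D ∧ ∀ C, SpliceCl Sig D C → (v ∈ C ↔ d ∈ C) := by
  simp only [atom, mem_sdiff, mem_sup, mem_filter, mem_univ, true_and, not_exists, not_and]
  refine and_congr_right fun hv => forall₂_congr fun C _ => ?_
  split_ifs with hd <;> simp [hv, hd]

lemma spliceCl_atom : SpliceCl Sig D (atom Sig D d) := by
  classical
  refine SpliceCl.compl (sup_induction (p := SpliceCl Sig D) SpliceCl.empty
    (fun _ hA _ hB => hA.union hB) fun C hC => ?_)
  split_ifs
  exacts [(mem_filter.mp hC).2.compl, (mem_filter.mp hC).2]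

lemma mem_atom_self (hd : d ∈ D) : d ∈ atom Sig D d :=
  mem_atom.mpr ⟨hd, fun _ _ => Iff.rfl⟩

lemma atom_subset (hC : SpliceCl Sig D C) (hd : d ∈ C) : atom Sig D d ⊆ C :=
  fun _ hv => ((mem_atom.mp hv).2 C hC).mpr hd

end SpliceClosure

section Separation

variable [DecidableEq V]

def Separated (Sig : Set (Constraint V)) (b c : Finset V) : Prop :=
  ∃ X Y Z, Constraint.ci X Y Z ∈ Sig ∧ Disjoint b X ∧ Disjoint b Z ∧ Disjoint c X ∧ c ⊆ Z

variable [Fintype V] {Sig : Set (Constraint V)} {D P : Finset V} {d e : V}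

lemma separated_atom_of_splice {X Y Z A B : Finset V} (hσ : Constraint.ci X Y Z ∈ Sig)
    (hA : SpliceCl Sig D A) (hB : SpliceCl Sig D B) (hx : A ∩ X = B ∩ X)
    (hd : d ∈ A \ Z ∪ B ∩ Z) (heP : e ∉ A \ Z ∪ B ∩ Z) (hAde : d ∈ A → e ∈ A)
    (hBde : d ∈ B → e ∈ B) :
    Separated Sig (atom Sig D d) (atom Sig D e) ∨ Separated Sig (atom Sig D e) (atom Sig D d) := by
  have hXAB : ∀ v ∈ X, v ∈ A ↔ v ∈ B := fun v hv => by
    simpa [hv] using Finset.ext_iff.mp hx v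
  have hatom : ∀ {c v}, v ∈ atom Sig D c →
      (v ∈ A ↔ c ∈ A) ∧ (v ∈ B ↔ c ∈ B) ∧ (v ∈ A \ Z ∪ B ∩ Z ↔ c ∈ A \ Z ∪ B ∩ Z) :=
    fun hv => have h := (mem_atom.mp hv).2
      ⟨h A hA, h B hB, h _ (.splice hσ hA hB hx)⟩
  simp only [mem_union, mem_sdiff, mem_inter] at hd heP hatom
  by_cases hdA : d ∈ A
  · have heA : e ∈ A := hAde hdA
    have heZ : e ∈ Z := by_contra fun h => heP (.inl ⟨heA, h⟩)
    have heB : e ∉ B := fun h => heP (.inr ⟨h, heZ⟩)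
    have hdB : d ∉ B := fun h => heB (hBde h)
    refine .inl ⟨X, Y, Z, hσ, disjoint_left.mpr fun v hv hvX => ?_,
      disjoint_left.mpr fun v hv hvZ => ?_, disjoint_left.mpr fun w hw hwX => ?_,
      fun w hw => by_contra fun hwZ => ?_⟩
    · obtain ⟨hvA, hvB, -⟩ := hatom hv
      exact hdB (hvB.mp ((hXAB v hvX).mp (hvA.mpr hdA)))
    · obtain ⟨-, hvB, hvP⟩ := hatom hv
      rcases hvP.mpr hd with h | h
      exacts [h.2 hvZ, hdB (hvB.mp h.1)]
    · obtain ⟨hwA, hwB, -⟩ := hatom hw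
      exact heB (hwB.mp ((hXAB w hwX).mp (hwA.mpr heA)))
    · obtain ⟨hwA, -, hwP⟩ := hatom hw
      exact heP (hwP.mp (.inl ⟨hwA.mpr heA, hwZ⟩))
  · have hdB : d ∈ B ∧ d ∈ Z := hd.resolve_left fun h => hdA h.1
    have heB : e ∈ B := hBde hdB.1
    have heZ : e ∉ Z := fun h => heP (.inr ⟨heB, h⟩)
    have heA : e ∉ A := fun h => heP (.inl ⟨h, heZ⟩)
    refine .inr ⟨X, Y, Z, hσ, disjoint_left.mpr fun w hw hwX => ?_,
      disjoint_left.mpr fun w hw hwZ => ?_, disjoint_left.mpr fun v hv hvX => ?_,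
      fun v hv => ?_⟩
    · obtain ⟨hwA, hwB, -⟩ := hatom hw
      exact heA (hwA.mp ((hXAB w hwX).mpr (hwB.mpr heB)))
    · obtain ⟨-, hwB, hwP⟩ := hatom hw
      exact heP (hwP.mp (.inr ⟨hwB.mpr heB, hwZ⟩))
    · obtain ⟨hvA, hvB, -⟩ := hatom hv
      exact hdA (hvA.mp ((hXAB v hvX).mpr (hvB.mpr hdB.1)))
    · obtain ⟨hvA, -, hvP⟩ := hatom hv
      exact ((hvP.mpr hd).resolve_left fun h => hdA (hvA.mp h.1)).2

lemma SpliceCl.separated_atom (hP : SpliceCl Sig D P) (hd : d ∈ P) (he : e ∈ D) (heP : e ∉ P) :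
    Separated Sig (atom Sig D d) (atom Sig D e) ∨ Separated Sig (atom Sig D e) (atom Sig D d) := by
  induction hP with
  | empty => simp at hd
  | self => exact absurd he heP
  | @splice X Y Z A B hσ hA hB hx ihA ihB =>
    by_cases hAde : d ∈ A → e ∈ A
    · by_cases hBde : d ∈ B → e ∈ B
      · exact separated_atom_of_splice hσ hA hB hx hd heP hAde hBde
      · exact ihB (of_not_imp hBde) fun h => hBde fun _ => h
    · exact ihA (of_not_imp hAde) fun h => hAde fun _ => h

end Separation

section Multiplicativity

variable [DecidableEq V] {K : Type*} [CommSemiring K] {Sig : Set (Constraint V)} {D : Finset V}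

/-- The exchange identity of the CIs of `Sig`, transported to the index sets of the cube
`A ↦ mixOn A t s`. -/
def SpliceExchange (Sig : Set (Constraint V)) (D : Finset V) (f : Finset V → K) : Prop :=
  ∀ ⦃X Y Z A B : Finset V⦄, Constraint.ci X Y Z ∈ Sig → SpliceCl Sig D A → SpliceCl Sig D B →
    A ∩ X = B ∩ X → f A * f B = f (A \ Z ∪ B ∩ Z) * f (B \ Z ∪ A ∩ Z)

namespace SpliceExchange

variable {f : Finset V → K} {Q b c : Finset V}

lemma mul_union_union (hf : SpliceExchange Sig D f)
    (hsep : Separated Sig b c ∨ Separated Sig c b) (hQ : SpliceCl Sig D Q)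
    (hb : SpliceCl Sig D b) (hc : SpliceCl Sig D c) :
    f (Q ∪ b) * f (Q ∪ c) = f (Q ∪ b ∪ c) * f Q := by
  wlog hbc : Separated Sig b c generalizing b c
  · rw [mul_comm, union_right_comm]
    exact this hsep.symm hc hb (hsep.resolve_left hbc)
  obtain ⟨X, Y, Z, hσ, hbX, hbZ, hcX, hcZ⟩ := hbc
  have hx : (Q ∪ b) ∩ X = (Q ∪ c) ∩ X := by
    rw [union_inter_distrib_right, union_inter_distrib_right, disjoint_iff_inter_eq_empty.mp hbX,
      disjoint_iff_inter_eq_empty.mp hcX]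
  convert hf hσ (hQ.union hb) (hQ.union hc) hx using 3 <;> ext v <;>
  · have hvb : v ∈ b → v ∉ Z := fun h => disjoint_left.mp hbZ h
    have hvc : v ∈ c → v ∈ Z := fun h => hcZ h
    simp only [mem_union, mem_sdiff, mem_inter]
    tauto

variable [IsCancelMulZero K] [Fintype V]

lemma mul_union_atom (hf : SpliceExchange Sig D f) (hne : ∀ A, SpliceCl Sig D A → f A ≠ 0)
    {d : V} (hd : d ∈ D) (Q : Finset V) (hQ : SpliceCl Sig D Q)
    (hdQ : Disjoint (atom Sig D d) Q) :
    f (Q ∪ atom Sig D d) * f ∅ = f Q * f (atom Sig D d) := by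
  induction Q using Finset.strongInduction with
  | H Q ih =>
  rcases Q.eq_empty_or_nonempty with rfl | ⟨e, he⟩
  · rw [empty_union, mul_comm]
  have hc : SpliceCl Sig D (atom Sig D e) := spliceCl_atom
  have hcQ : atom Sig D e ⊆ Q := atom_subset hQ he
  have hQ' : SpliceCl Sig D (Q \ atom Sig D e) := hQ.sdiff hc
  have ih' := ih _ (sdiff_ssubset hcQ ⟨e, mem_atom_self (hQ.subset he)⟩) hQ'
    (disjoint_of_subset_right sdiff_subset hdQ)
  have hsq := hf.mul_union_union
    (hQ.separated_atom he hd (disjoint_left.mp hdQ (mem_atom_self hd))).symm hQ' spliceCl_atom hc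
  rw [← sdiff_union_of_subset hcQ, union_right_comm]
  apply mul_right_cancel₀ (hne _ hQ')
  rw [mul_right_comm, ← hsq, mul_right_comm, ih']
  ring

lemma mul_union (hf : SpliceExchange Sig D f) (hne : ∀ A, SpliceCl Sig D A → f A ≠ 0)
    (W : Finset V) (hW : SpliceCl Sig D W) {U : Finset V} (hU : SpliceCl Sig D U)
    (hUW : Disjoint U W) : f (U ∪ W) * f ∅ = f U * f W := by
  induction W using Finset.strongInduction with
  | H W ih =>
  rcases W.eq_empty_or_nonempty with rfl | ⟨e, he⟩
  · rw [union_empty]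
  have he' : e ∈ D := hW.subset he
  have hcW : atom Sig D e ⊆ W := atom_subset hW he
  have hW' : SpliceCl Sig D (W \ atom Sig D e) := hW.sdiff spliceCl_atom
  have hUW' : Disjoint U (W \ atom Sig D e) := disjoint_of_subset_right sdiff_subset hUW
  have h₁ := hf.mul_union_atom hne he' _ (hU.union hW') (disjoint_union_right.mpr
    ⟨(disjoint_of_subset_right hcW hUW).symm, disjoint_sdiff⟩)
  have h₂ := ih _ (sdiff_ssubset hcW ⟨e, mem_atom_self he'⟩) hW' hUW'
  have h₃ := hf.mul_union_atom hne he' _ hW' disjoint_sdiff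
  rw [← sdiff_union_of_subset hcW, ← union_assoc]
  apply mul_right_cancel₀ (hne _ .empty)
  rw [h₁, mul_right_comm, h₂, mul_assoc, ← h₃, mul_assoc]

end SpliceExchange

end Multiplicativity

section Boolean

variable [DecidableEq V] [Fintype V] {Dom : V → Type*} {K : Type*} [CommSemiring K]
  {Sig : Set (Constraint V)} {t s : FullTup Dom}

lemma SpliceCl.mixOn_ne_zero [NoZeroDivisors K] {R : FullTup Dom → K}
    (hex : ∀ X Y Z, Constraint.ci X Y Z ∈ Sig → Exchange R X Z) (ht : R t ≠ 0) (hs : R s ≠ 0)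
    {A : Finset V} (hA : SpliceCl Sig (diffSet t s) A) : R (mixOn A t s) ≠ 0 := by
  induction hA with
  | empty => rwa [mixOn_empty]
  | self => rwa [mixOn_diffSet]
  | @splice X Y Z A B hσ _ _ hx ihA ihB =>
    have h := hex X Y Z hσ (mixOn A t s) (mixOn B t s) (agreeOn_mixOn_of_inter_eq hx)
    rw [mixOn_mixOn, mixOn_mixOn] at h
    exact left_ne_zero_of_mul (h ▸ mul_ne_zero ihA ihB)

lemma spliceExchange_mixOn {R : FullTup Dom → K}
    (hex : ∀ X Y Z, Constraint.ci X Y Z ∈ Sig → Exchange R X Z) :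
    SpliceExchange Sig (diffSet t s) fun A => R (mixOn A t s) :=
  fun X Y Z _ _ hσ _ _ hx => by
    rw [hex X Y Z hσ _ _ (agreeOn_mixOn_of_inter_eq hx), mixOn_mixOn, mixOn_mixOn]

open Classical in
noncomputable def cubeRel (Sig : Set (Constraint V)) (t s : FullTup Dom) : FullTup Dom → B2 :=
  fun w => if ∃ A, SpliceCl Sig (diffSet t s) A ∧ mixOn A t s = w then 1 else 0

lemma cubeRel_ne_zero_iff {w : FullTup Dom} :
    cubeRel Sig t s w ≠ 0 ↔ ∃ A, SpliceCl Sig (diffSet t s) A ∧ mixOn A t s = w := by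
  by_cases h : ∃ A, SpliceCl Sig (diffSet t s) A ∧ mixOn A t s = w <;>
    simp only [cubeRel, h, if_true, if_false] <;> decide

lemma cubeRel_eq_zero_or_one (w : FullTup Dom) : cubeRel Sig t s w = 0 ∨ cubeRel Sig t s w = 1 := by
  unfold cubeRel
  split_ifs <;> simp

lemma exchange_cubeRel {X Y Z : Finset V} (hσ : Constraint.ci X Y Z ∈ Sig) :
    Exchange (cubeRel Sig t s) X Z := by
  refine exchange_of_mem_support cubeRel_eq_zero_or_one fun _ _ h ht hs => ?_
  obtain ⟨A, hA, rfl⟩ := cubeRel_ne_zero_iff.mp ht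
  obtain ⟨B, hB, rfl⟩ := cubeRel_ne_zero_iff.mp hs
  exact cubeRel_ne_zero_iff.mpr
    ⟨_, .splice hσ hA hB (inter_eq_of_agreeOn_mixOn hA.subset hB.subset h), (mixOn_mixOn ..).symm⟩

variable [∀ a, Fintype (Dom a)]

lemma Constraint.SatBy.cubeRel {R : FullTup Dom → K} (hSig : ∀ σ ∈ Sig, σ.SCIorFD)
    (hR : ∀ σ ∈ Sig, σ.SatBy R) (hsupp : ∀ A, SpliceCl Sig (diffSet t s) A → R (mixOn A t s) ≠ 0)
    {σ : Constraint V} (hσ : σ ∈ Sig) : σ.SatBy (cubeRel Sig t s) := by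
  cases σ with
  | ci X Y Z =>
    obtain ⟨-, hXZ, hYZ, hcov⟩ := hSig _ hσ
    exact satCI_of_exchange hXZ hYZ hcov (exchange_cubeRel hσ)
  | fd U W =>
    refine satFD_of_support_subset (fun w hw => ?_) (hR _ hσ)
    obtain ⟨A, hA, rfl⟩ := cubeRel_ne_zero_iff.mp hw
    exact hsupp A hA

end Boolean

section Main

variable [DecidableEq V] [Fintype V] {Dom : V → Type*} [∀ a, Fintype (Dom a)]
  {K : Type*} [CommSemiring K] {Sig : Set (Constraint V)}

lemma exchange_of_impliesOver_B2 (hpos : plusPos K) [IsCancelMulZero K]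
    (hSig : ∀ σ ∈ Sig, σ.SCIorFD) {X Y Z : Finset V} (hXZ : Disjoint X Z) (hYZ : Disjoint Y Z)
    (hcov : X ∪ Y ∪ Z = univ) (hB : impliesOver Dom B2 Sig (.ci X Y Z)) {R : FullTup Dom → K}
    (hR : ∀ σ ∈ Sig, σ.SatBy R) : Exchange R X Z := by
  have hex : ∀ X Y Z, Constraint.ci X Y Z ∈ Sig → Exchange R X Z := fun X Y Z hσ => by
    obtain ⟨-, hXZ, hYZ, hcov⟩ := hSig _ hσ
    exact exchange_of_satCI hpos hXZ hYZ hcov (hR _ hσ)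
  refine exchange_of_support fun t s hts ht hs => ?_
  set D := diffSet t s
  have hsupp : ∀ A, SpliceCl Sig D A → R (mixOn A t s) ≠ 0 := fun A hA =>
    hA.mixOn_ne_zero hex ht hs
  have hcube : Exchange (cubeRel Sig t s) X Z := exchange_of_satCI plusPos_B2 hXZ hYZ hcov <|
    hB _ ⟨t, cubeRel_ne_zero_iff.mpr ⟨∅, .empty, mixOn_empty⟩⟩ fun σ hσ =>
      Constraint.SatBy.cubeRel hSig hR hsupp hσ
  have hZ : SpliceCl Sig D (D ∩ Z) := by
    have hts' : cubeRel Sig t s t * cubeRel Sig t s s ≠ 0 := mul_ne_zero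
      (cubeRel_ne_zero_iff.mpr ⟨∅, .empty, mixOn_empty⟩)
      (cubeRel_ne_zero_iff.mpr ⟨D, .self, mixOn_diffSet⟩)
    obtain ⟨A, hA, hAZ⟩ := cubeRel_ne_zero_iff.mp (left_ne_zero_of_mul (hcube t s hts ▸ hts'))
    rw [← mixOn_diffSet_inter Z] at hAZ
    rwa [← mixOn_injOn hA.subset inter_subset_left hAZ]
  have hmul : R (mixOn (D \ Z ∪ D ∩ Z) t s) * R (mixOn ∅ t s) =
      R (mixOn (D \ Z) t s) * R (mixOn (D ∩ Z) t s) :=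
    (spliceExchange_mixOn hex).mul_union hsupp _ hZ
      (by simpa only [sdiff_inter_self_left] using hZ.compl) (disjoint_sdiff_inter D Z)
  rw [sdiff_union_inter, mixOn_diffSet, mixOn_empty, mixOn_diffSet_sdiff, mixOn_diffSet_inter]
    at hmul
  rw [mul_comm, hmul, mul_comm]

theorem impliesOver_iff_impliesOver_B2 [Nontrivial K] [IsCancelMulZero K] (hpos : plusPos K)
    {τ : Constraint V} (hSig : ∀ σ ∈ Sig, σ.SCIorFD) (hτ : τ.SCIorFD) :
    impliesOver Dom K Sig τ ↔ impliesOver Dom B2 Sig τ := by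
  constructor
  · intro hK R ⟨t, ht⟩ hR
    rw [← supportIndicator_supportIndicator (K := K) R]
    refine (hK _ ⟨t, supportIndicator_eq_zero_iff.not.mpr ht⟩ fun σ hσ => ?_).supportIndicator
      hpos hτ
    exact (hR σ hσ).supportIndicator plusPos_B2 (hSig σ hσ)
  · intro hB R ⟨t, ht⟩ hR
    cases τ with
    | ci X Y Z =>
      obtain ⟨-, hXZ, hYZ, hcov⟩ := hτ
      exact satCI_of_exchange hXZ hYZ hcov
        (exchange_of_impliesOver_B2 hpos hSig hXZ hYZ hcov hB hR)
    | fd U W =>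
      refine satFD_of_support_subset (fun w => supportIndicator_eq_zero_iff.not.mpr)
        (hB _ ⟨t, supportIndicator_eq_zero_iff.not.mpr ht⟩ fun σ hσ => ?_)
      exact (hR σ hσ).supportIndicator hpos (hSig σ hσ)

end Main

theorem sciFd_implication_semiring_independent_general
    [DecidableEq V] [Fintype V] (Dom : V → Type*)
    [∀ a, Fintype (Dom a)]
    (K K' : Type*) [CommSemiring K] [Nontrivial K] [CommSemiring K'] [Nontrivial K']
    (hposK : posSemiring K) (hmcK : mulCanc K)
    (hposK' : posSemiring K') (hmcK' : mulCanc K')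
    (Sig : Set (Constraint V)) (τ : Constraint V)
    (hSig : ∀ σ ∈ Sig, σ.SCIorFD) (hτ : τ.SCIorFD) :
    impliesOver Dom K Sig τ ↔ impliesOver Dom K' Sig τ := by
  have := hmcK.isCancelMulZero
  have := hmcK'.isCancelMulZero
  exact (impliesOver_iff_impliesOver_B2 hposK.1 hSig hτ).trans
    (impliesOver_iff_impliesOver_B2 hposK'.1 hSig hτ).symm

/-- Implication of saturated CIs and FDs does not depend on the choice of the
positive, multiplicatively cancellative semiring. -/
theorem sciFd_implication_semiring_independent
    [DecidableEq V] [Fintype V] (Dom : V → Type*)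
    [∀ a, Fintype (Dom a)] [∀ a, Nonempty (Dom a)]
    (K K' : Type*) [CommSemiring K] [Nontrivial K] [CommSemiring K'] [Nontrivial K']
    (hposK : posSemiring K) (hmcK : mulCanc K)
    (hposK' : posSemiring K') (hmcK' : mulCanc K')
    (Sig : Set (Constraint V)) (τ : Constraint V)
    (hSig : ∀ σ ∈ Sig, σ.SCIorFD) (hτ : τ.SCIorFD) :
    impliesOver Dom K Sig τ ↔ impliesOver Dom K' Sig τ :=
  sciFd_implication_semiring_independent_general Dom K K' hposK hmcK hposK' hmcK' Sig τ hSig hτ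
end

section
/- Let K be a nontrivial commutative semiring whose addition is idempotent (a + a = a for all a ∈ K), let V be a finite schema of variables with finite nonempty domains, and let Σ ∪ {τ} be a set of conditional independence statements over V. If Σ implies τ over K-relations, then Σ implies τ over Boolean-semiring relations. -/
/-! # Preliminaries: K-relations over semirings -/

open Finset

variable {V : Type*}

/-- A conditional independence statement `CI(X; Y, Z)`, given as a triple. -/
abbrev CITriple (V : Type*) := Finset V × Finset V × Finset V

/-- Satisfaction of a CI statement by a `K`-relation over the full schema `V`. -/
def CITriple.SatBy [DecidableEq V] [Fintype V] {Dom : V → Type*}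
    [∀ a, Fintype (Dom a)] {K : Type*} [CommSemiring K]
    (σ : CITriple V) (R : Tup Dom (Finset.univ : Finset V) → K) : Prop :=
  satCI R (Finset.subset_univ σ.1) (Finset.subset_univ σ.2.1) (Finset.subset_univ σ.2.2)

/-- The three components of a CI statement are pairwise disjoint. -/
def CITriple.PairwiseDisjoint {V : Type*} (σ : CITriple V) : Prop :=
  Disjoint σ.1 σ.2.1 ∧ Disjoint σ.1 σ.2.2 ∧ Disjoint σ.2.1 σ.2.2

/-- `Σ` implies `τ` over `K`-relations over the full schema `V`. -/
def impliesCIOver [DecidableEq V] [Fintype V] (Dom : V → Type*) [∀ a, Fintype (Dom a)]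
    (K : Type*) [CommSemiring K] (Sig : Set (CITriple V)) (τ : CITriple V) : Prop :=
  ∀ R : Tup Dom (Finset.univ : Finset V) → K,
    (∀ σ ∈ Sig, CITriple.SatBy σ R) → CITriple.SatBy τ R

/-!
Boolean relations embed into `K`-relations along the semiring map `𝔹 → K` sending `0 ↦ 0` and
`1 ↦ 1`, which respects addition exactly because `1 + 1 = 1` in `K`, and is injective because `K`
is nontrivial. Marginals commute with this map, so a Boolean relation satisfies a CI statement iff
its image does; the implication over `K` therefore transfers to `𝔹`.
-/

open Function

section Transfer

variable [DecidableEq V] {Dom : V → Type*} [∀ a, Fintype (Dom a)]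
  {K L : Type*} [CommSemiring K] [CommSemiring L]

theorem map_margin {F : Type*} [FunLike F K L] [AddMonoidHomClass F K L] (f : F)
    {X Y : Finset V} (R : Tup Dom X → K) (h : Y ⊆ X) (u : Tup Dom Y) :
    f (margin R h u) = margin (f ∘ R) h u := by
  unfold margin
  rw [map_sum]
  refine Finset.sum_congr rfl fun t _ => ?_
  split_ifs <;> simp

theorem satCI_comp_iff (f : K →+* L) (hf : Injective f) {S X Y Z : Finset V}
    (R : Tup Dom S → K) (hX : X ⊆ S) (hY : Y ⊆ S) (hZ : Z ⊆ S) :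
    satCI (f ∘ R) hX hY hZ ↔ satCI R hX hY hZ := by
  refine forall_congr' fun t => ?_
  simp only [← map_margin f, ← map_mul, hf.eq_iff]

theorem CITriple.satBy_comp_iff [Fintype V] (f : K →+* L) (hf : Injective f) (σ : CITriple V)
    (R : Tup Dom (Finset.univ : Finset V) → K) :
    σ.SatBy (f ∘ R) ↔ σ.SatBy R :=
  satCI_comp_iff f hf R _ _ _

end Transfer

def B2.castHom (K : Type*) [CommSemiring K] (hidem : ∀ a : K, a + a = a) : B2 →+* K where
  toFun b := Bool.rec 0 1 b
  map_zero' := rfl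
  map_one' := rfl
  map_add' a b := by
    cases a <;> cases b
    exacts [(zero_add 0).symm, (zero_add 1).symm, (add_zero 1).symm, (hidem 1).symm]
  map_mul' a b := by
    cases a <;> cases b
    exacts [(zero_mul 0).symm, (zero_mul 1).symm, (mul_zero 1).symm, (mul_one 1).symm]

theorem B2.castHom_injective (K : Type*) [CommSemiring K] [Nontrivial K]
    (hidem : ∀ a : K, a + a = a) : Injective (B2.castHom K hidem) := by
  intro a b hab
  cases a <;> cases b
  exacts [rfl, absurd hab zero_ne_one, absurd hab one_ne_zero, rfl]

theorem idempotentImplication_to_boolean_general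
    [DecidableEq V] [Fintype V] (Dom : V → Type*)
    [∀ a, Fintype (Dom a)]
    (K : Type*) [CommSemiring K] [Nontrivial K]
    (hidem : ∀ a : K, a + a = a)
    (Sig : Set (CITriple V)) (τ : CITriple V)
    (h : impliesCIOver Dom K Sig τ) :
    impliesCIOver Dom B2 Sig τ := by
  intro R hR
  have transfer (σ : CITriple V) := σ.satBy_comp_iff _ (B2.castHom_injective K hidem) R
  exact (transfer τ).mp (h _ fun σ hσ => (transfer σ).mpr (hR σ hσ))

/-- If addition in `K` is idempotent, CI implication over `K`-relations entails
CI implication over Boolean-semiring relations. -/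
theorem idempotentImplication_to_boolean
    [DecidableEq V] [Fintype V] (Dom : V → Type*)
    [∀ a, Fintype (Dom a)] [∀ a, Nonempty (Dom a)]
    (K : Type*) [CommSemiring K] [Nontrivial K]
    (hidem : ∀ a : K, a + a = a)
    (Sig : Set (CITriple V)) (τ : CITriple V)
    (hdisj : ∀ σ ∈ insert τ Sig, CITriple.PairwiseDisjoint σ)
    (h : impliesCIOver Dom K Sig τ) :
    impliesCIOver Dom B2 Sig τ :=
  idempotentImplication_to_boolean_general Dom K hidem Sig τ h
end
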